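/- arXiv:1703.04377 — 2 statements merged into one kernel-verified Lean document; each statement's English description precedes it below -/
import Mathlib

section
/- Let $v$ be a continuous piecewise polynomial of degree at most $p$ on $[-h,0]\cup[0,h]$ (with $h>0$), with possible jumps in derivatives at $0$. Then there exists a constant $C$ depending only on $p$ (not on $h$ or $v$) such that $\int_0^h |v(x) - \tilde v(x)|^2\,dx \le C \sum_{j=1}^p h^{2j+1} [v^{(j)}(0)]^2$, where $\tilde v$ is the polynomial extension of $v|_{[-h,0]}$ and $[v^{(j)}(0)]$ is the jump of the $j$-th derivative at $0$. -/
open Polynomial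

/-- 1D ghost-penalty estimate: the `L²` norm on `(0,h)` of the discrepancy between the
two branches of a continuous piecewise polynomial is controlled by the scaled jumps
of the derivatives at the interface `0`. -/
theorem jump_controls_discrepancy (p : ℕ) :
    ∃ C : ℝ, 0 < C ∧ ∀ h : ℝ, 0 < h → ∀ P Q : Polynomial ℝ,
      P.natDegree ≤ p → Q.natDegree ≤ p → P.eval 0 = Q.eval 0 →
      (∫ x in (0:ℝ)..h, (Q.eval x - P.eval x) ^ 2) ≤
        C * ∑ j ∈ Finset.Icc 1 p,
          h ^ (2 * j + 1) *
            ((Polynomial.derivative^[j] Q).eval 0 - (Polynomial.derivative^[j] P).eval 0) ^ 2 := by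
  refine ⟨p + 1, by positivity, ?_⟩
  intro h hh P Q hP hQ h0
  set R := Q - P with hRdef
  have hdeg : R.natDegree < p + 1 :=
    Nat.lt_succ_of_le ((Polynomial.natDegree_sub_le Q P).trans (max_le hQ hP))
  have hcoeff0 : R.coeff 0 = 0 := by
    rw [Polynomial.coeff_zero_eq_eval_zero, hRdef, Polynomial.eval_sub, h0, sub_self]
  -- jump identity
  have hjump : ∀ j : ℕ,
      (Polynomial.derivative^[j] Q).eval 0 - (Polynomial.derivative^[j] P).eval 0
        = (j.factorial : ℝ) * R.coeff j := by
    intro j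
    have h1 : (Polynomial.derivative^[j] R).eval 0 = (j.factorial : ℝ) * R.coeff j := by
      rw [← Polynomial.coeff_zero_eq_eval_zero, Polynomial.coeff_iterate_derivative]
      simp [Nat.descFactorial_self]
    rw [← h1, hRdef, Polynomial.iterate_derivative_sub, Polynomial.eval_sub]
  -- pointwise bound on [0,h]
  set M : ℝ := (p + 1 : ℝ) * ∑ j ∈ Finset.Icc 1 p, R.coeff j ^ 2 * h ^ (2 * j) with hM
  have hpt : ∀ x ∈ Set.Icc (0:ℝ) h, (R.eval x) ^ 2 ≤ M := by
    intro x hx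
    have hxsub : Finset.Icc 1 p ⊆ Finset.range (p + 1) := by
      intro j hj
      simp only [Finset.mem_Icc] at hj
      exact Finset.mem_range.mpr (Nat.lt_succ_of_le hj.2)
    have heval : R.eval x = ∑ j ∈ Finset.Icc 1 p, R.coeff j * x ^ j := by
      rw [Polynomial.eval_eq_sum_range' hdeg]
      refine (Finset.sum_subset hxsub ?_).symm
      intro j _ hj
      simp only [Finset.mem_Icc, not_and, not_le] at hj
      rcases Nat.eq_zero_or_pos j with h0j | h0j
      · simp [h0j, hcoeff0]
      · have : p < j := hj h0j
        rw [Polynomial.coeff_eq_zero_of_natDegree_lt (lt_of_le_of_lt ((Polynomial.natDegree_sub_le Q P).trans (max_le hQ hP)) this), zero_mul]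
    rw [heval]
    calc (∑ j ∈ Finset.Icc 1 p, R.coeff j * x ^ j) ^ 2
        ≤ (Finset.Icc 1 p).card * ∑ j ∈ Finset.Icc 1 p, (R.coeff j * x ^ j) ^ 2 :=
          sq_sum_le_card_mul_sum_sq
      _ ≤ M := by
          rw [hM]
          have hcard : ((Finset.Icc 1 p).card : ℝ) ≤ (p + 1 : ℝ) := by
            rw [Nat.card_Icc]; push_cast; linarith
          have hsum : ∑ j ∈ Finset.Icc 1 p, (R.coeff j * x ^ j) ^ 2
              ≤ ∑ j ∈ Finset.Icc 1 p, R.coeff j ^ 2 * h ^ (2 * j) := by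
            refine Finset.sum_le_sum fun j _ => ?_
            rw [mul_pow, ← pow_mul, mul_comm j 2]
            have : x ^ (2 * j) ≤ h ^ (2 * j) := pow_le_pow_left₀ hx.1 hx.2 _
            exact mul_le_mul_of_nonneg_left this (sq_nonneg _)
          refine mul_le_mul hcard hsum (Finset.sum_nonneg fun j _ => sq_nonneg _) (by positivity)
  -- integral bound
  have hcont : Continuous fun x : ℝ => (R.eval x) ^ 2 := R.continuous.pow 2
  have hint : (∫ x in (0:ℝ)..h, (R.eval x) ^ 2) ≤ ∫ _x in (0:ℝ)..h, M := by
    refine intervalIntegral.integral_mono_on hh.le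
      (hcont.intervalIntegrable _ _) (intervalIntegrable_const) ?_
    exact hpt
  have hconst : (∫ _x in (0:ℝ)..h, M) = h * M := by
    rw [intervalIntegral.integral_const, smul_eq_mul, sub_zero]
  have key : (∫ x in (0:ℝ)..h, (R.eval x) ^ 2)
      ≤ (p + 1 : ℝ) * ∑ j ∈ Finset.Icc 1 p,
          h ^ (2 * j + 1) *
            ((Polynomial.derivative^[j] Q).eval 0 - (Polynomial.derivative^[j] P).eval 0) ^ 2 := by
    refine (hint.trans_eq hconst).trans ?_
    rw [hM, ← mul_assoc, mul_comm h ((p:ℝ)+1), mul_assoc, Finset.mul_sum]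
    refine mul_le_mul_of_nonneg_left (Finset.sum_le_sum fun j _ => ?_) (by positivity)
    rw [hjump j, mul_pow, pow_succ]
    have hfact : (1:ℝ) ≤ ((j.factorial : ℝ)) ^ 2 := by
      have := j.factorial_pos
      have h1 : (1:ℝ) ≤ (j.factorial : ℝ) := by exact_mod_cast this
      nlinarith
    have : R.coeff j ^ 2 ≤ (j.factorial : ℝ) ^ 2 * R.coeff j ^ 2 :=
      le_mul_of_one_le_left (sq_nonneg _) hfact
    calc h * (R.coeff j ^ 2 * h ^ (2 * j))
        = h ^ (2 * j) * h * R.coeff j ^ 2 := by ring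
      _ ≤ h ^ (2 * j) * h * ((j.factorial : ℝ) ^ 2 * R.coeff j ^ 2) := by
          exact mul_le_mul_of_nonneg_left this (by positivity)
      _ = h ^ (2 * j) * h * ((j.factorial : ℝ) ^ 2 * R.coeff j ^ 2) := rfl
  have : (fun x => (Q.eval x - P.eval x) ^ 2) = fun x => (R.eval x) ^ 2 := by
    funext x; rw [hRdef, Polynomial.eval_sub]
  rw [this]
  exact key
end

section
/- Let $v$ be a continuous piecewise polynomial of degree at most $p$ on $[-h,0]\cup[0,h]$. Then there is a constant $C=C(p)$ independent of $h$ such that $\int_0^h |v(x)|^2\,dx \le C\Big(\int_{-h}^0 |v(x)|^2\,dx + \sum_{j=1}^p h^{2j+1}[v^{(j)}(0)]^2\Big)$. -/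
open Polynomial

/-- Coefficient norm controlled by L² norm on `(-1,0)` for polynomials of degree `< n`. -/
lemma keyA (n : ℕ) (hn : 0 < n) : ∃ c : ℝ, 0 < c ∧ ∀ b : Fin n → ℝ,
    (∑ i, (b i) ^ 2) ≤ c * ∫ t in (-1:ℝ)..0, (∑ i, b i * t ^ (i : ℕ)) ^ 2 := by
  set g : (Fin n → ℝ) → ℝ := fun b => ∫ t in (-1:ℝ)..0, (∑ i, b i * t ^ (i : ℕ)) ^ 2 with hg
  have hcont : ∀ b : Fin n → ℝ, Continuous fun t : ℝ => (∑ i, b i * t ^ (i : ℕ)) ^ 2 := by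
    intro b; fun_prop
  have hg_eq : ∀ b : Fin n → ℝ, g b =
      ∑ i : Fin n, ∑ j : Fin n, b i * b j * ∫ t in (-1:ℝ)..0, t ^ ((i : ℕ) + (j : ℕ)) := by
    intro b
    have hpt : ∀ t : ℝ, (∑ i, b i * t ^ (i : ℕ)) ^ 2
        = ∑ i : Fin n, ∑ j : Fin n, b i * b j * t ^ ((i : ℕ) + (j : ℕ)) := by
      intro t
      rw [sq, Finset.sum_mul_sum]
      exact Finset.sum_congr rfl fun i _ => Finset.sum_congr rfl fun j _ => by
        rw [pow_add]; ring
    simp only [hg, hpt]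
    rw [intervalIntegral.integral_finset_sum (fun i _ => by
      apply Continuous.intervalIntegrable; fun_prop)]
    refine Finset.sum_congr rfl fun i _ => ?_
    rw [intervalIntegral.integral_finset_sum (fun j _ => by
      apply Continuous.intervalIntegrable; fun_prop)]
    exact Finset.sum_congr rfl fun j _ => intervalIntegral.integral_const_mul _ _
  have hg_cont : Continuous g := by
    have : g = fun b : Fin n → ℝ =>
        ∑ i : Fin n, ∑ j : Fin n, b i * b j * ∫ t in (-1:ℝ)..0, t ^ ((i : ℕ) + (j : ℕ)) :=
      funext hg_eq
    rw [this]
    apply continuous_finset_sum; intro i _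
    apply continuous_finset_sum; intro j _
    exact (((continuous_apply i).mul (continuous_apply j)).mul continuous_const)
  have hg_pos : ∀ b : Fin n → ℝ, b ≠ 0 → 0 < g b := by
    intro b hb
    obtain ⟨i₀, hi₀⟩ := Function.ne_iff.mp hb
    set Pb : Polynomial ℝ := ∑ i : Fin n, C (b i) * X ^ (i : ℕ) with hPb
    have heval : ∀ t : ℝ, Pb.eval t = ∑ i, b i * t ^ (i : ℕ) := by
      intro t; simp [hPb, eval_finset_sum]
    have hPb_ne : Pb ≠ 0 := by
      intro hzero
      apply hi₀
      have : Pb.coeff (i₀ : ℕ) = b i₀ := by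
        rw [hPb, Polynomial.finset_sum_coeff]
        rw [Finset.sum_eq_single i₀]
        · simp
        · intro j _ hj
          have : (j : ℕ) ≠ (i₀ : ℕ) := fun hc => hj (Fin.ext hc)
          simp only [coeff_C_mul, coeff_X_pow, mul_ite, mul_one, mul_zero, ite_eq_right_iff]
          exact fun hc => absurd hc.symm this
        · simp
      rw [hzero] at this; simpa using this.symm
    have hroots : {t : ℝ | Pb.IsRoot t}.Finite := by
      by_contra hfin
      exact hPb_ne (Pb.eq_zero_of_infinite_isRoot hfin)
    have hIoo : (Set.Ioo (-1:ℝ) 0).Infinite := Set.Ioo_infinite (by norm_num)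
    obtain ⟨t₀, ht₀⟩ := (hIoo.diff hroots).nonempty
    have ht₀mem : t₀ ∈ Set.Ioo (-1:ℝ) 0 := ht₀.1
    have ht₀ne : Pb.eval t₀ ≠ 0 := ht₀.2
    apply intervalIntegral.integral_pos (by norm_num : (-1:ℝ) < 0)
      ((hcont b).continuousOn)
      (fun x _ => sq_nonneg _)
    refine ⟨t₀, Set.Ioo_subset_Icc_self ht₀mem, ?_⟩
    rw [← heval]
    positivity
  haveI : Nonempty (Fin n) := ⟨⟨0, hn⟩⟩
  have hsph : (Metric.sphere (0 : Fin n → ℝ) 1).Nonempty :=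
    NormedSpace.sphere_nonempty.mpr zero_le_one
  obtain ⟨b₀, hb₀, hmin⟩ := (isCompact_sphere (0 : Fin n → ℝ) 1).exists_isMinOn hsph
    hg_cont.continuousOn
  have hb₀norm : ‖b₀‖ = 1 := by simpa using hb₀
  have hε : 0 < g b₀ := hg_pos b₀ (by intro hc; rw [hc] at hb₀norm; simp at hb₀norm)
  refine ⟨n / g b₀, by positivity, ?_⟩
  intro b
  by_cases hb : b = 0
  · simp [hb, hg]
  · have hrpos : 0 < ‖b‖ := norm_pos_iff.mpr hb
    set u : Fin n → ℝ := ‖b‖⁻¹ • b with hu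
    have hu_norm : ‖u‖ = 1 := by
      rw [hu, norm_smul, norm_inv, norm_norm, inv_mul_cancel₀ hrpos.ne']
    have hu_sph : u ∈ Metric.sphere (0 : Fin n → ℝ) 1 := by
      simpa using hu_norm
    have hgu : g u = (‖b‖⁻¹) ^ 2 * g b := by
      have hpt : ∀ t : ℝ, (∑ i, u i * t ^ (i : ℕ)) = ‖b‖⁻¹ * ∑ i, b i * t ^ (i : ℕ) := by
        intro t; rw [Finset.mul_sum]; exact Finset.sum_congr rfl fun i _ => by
          simp [hu, mul_assoc]
      simp only [hg, hpt, mul_pow]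
      rw [intervalIntegral.integral_const_mul]
    have hεu : g b₀ ≤ g u := hmin hu_sph
    have hgb : ‖b‖ ^ 2 * g b₀ ≤ g b := by
      have := mul_le_mul_of_nonneg_left hεu (le_of_lt (pow_pos hrpos 2))
      calc ‖b‖ ^ 2 * g b₀ ≤ ‖b‖ ^ 2 * g u := this
        _ = ‖b‖ ^ 2 * ((‖b‖⁻¹) ^ 2 * g b) := by rw [hgu]
        _ = g b := by field_simp
    have hsum : (∑ i, (b i) ^ 2) ≤ (n : ℝ) * ‖b‖ ^ 2 := by
      calc (∑ i, (b i) ^ 2) ≤ ∑ _i : Fin n, ‖b‖ ^ 2 := by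
            apply Finset.sum_le_sum
            intro i _
            have h1 : |b i| ≤ ‖b‖ := by
              simpa [Real.norm_eq_abs] using norm_le_pi_norm b i
            calc (b i) ^ 2 = |b i| ^ 2 := (sq_abs _).symm
              _ ≤ ‖b‖ ^ 2 := by gcongr
        _ = (n : ℝ) * ‖b‖ ^ 2 := by simp [Finset.sum_const, mul_comm]
    calc (∑ i, (b i) ^ 2) ≤ (n : ℝ) * ‖b‖ ^ 2 := hsum
      _ = (n / g b₀) * (‖b‖ ^ 2 * g b₀) := by field_simp
      _ ≤ (n / g b₀) * g b := by
          apply mul_le_mul_of_nonneg_left hgb (by positivity)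

/-- Upper bound for the L² norm on `(0,1)` by the coefficient norm. -/
lemma keyB (n : ℕ) (b : Fin n → ℝ) :
    (∫ t in (0:ℝ)..1, (∑ i, b i * t ^ (i : ℕ)) ^ 2) ≤ (n : ℝ) * ∑ i, (b i) ^ 2 := by
  have hbound : ∀ t ∈ Set.Icc (0:ℝ) 1,
      (∑ i, b i * t ^ (i : ℕ)) ^ 2 ≤ (n : ℝ) * ∑ i, (b i) ^ 2 := by
    intro t ht
    have habs : |∑ i, b i * t ^ (i : ℕ)| ≤ ∑ i, |b i| := by
      calc |∑ i, b i * t ^ (i : ℕ)| ≤ ∑ i, |b i * t ^ (i : ℕ)| := Finset.abs_sum_le_sum_abs _ _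
        _ ≤ ∑ i, |b i| := by
            apply Finset.sum_le_sum
            intro i _
            rw [abs_mul]
            have h1 : |t ^ (i : ℕ)| ≤ 1 := by
              rw [abs_pow]
              apply pow_le_one₀ (abs_nonneg _)
              rw [abs_le]; constructor <;> linarith [ht.1, ht.2]
            calc |b i| * |t ^ (i : ℕ)| ≤ |b i| * 1 := by gcongr
              _ = |b i| := mul_one _
    calc (∑ i, b i * t ^ (i : ℕ)) ^ 2 = |∑ i, b i * t ^ (i : ℕ)| ^ 2 := (sq_abs _).symm
      _ ≤ (∑ i, |b i|) ^ 2 := by gcongr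
      _ ≤ (Finset.univ.card : ℝ) * ∑ i, |b i| ^ 2 := by
          exact_mod_cast sq_sum_le_card_mul_sum_sq (s := Finset.univ) (f := fun i => |b i|)
      _ = (n : ℝ) * ∑ i, (b i) ^ 2 := by simp [sq_abs]
  calc (∫ t in (0:ℝ)..1, (∑ i, b i * t ^ (i : ℕ)) ^ 2)
      ≤ ∫ _t in (0:ℝ)..1, ((n : ℝ) * ∑ i, (b i) ^ 2) := by
        apply intervalIntegral.integral_mono_on zero_le_one
          (Continuous.intervalIntegrable (by fun_prop) _ _)
          intervalIntegrable_const hbound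
    _ = (n : ℝ) * ∑ i, (b i) ^ 2 := by simp

/-- Change of variables and coefficient expansion. -/
lemma keyC (p : ℕ) {S : Polynomial ℝ} (hS : S.natDegree ≤ p) (h a b : ℝ) :
    (∫ x in (h*a)..(h*b), (S.eval x) ^ 2)
      = h * ∫ t in a..b, (∑ i : Fin (p+1), (S.coeff i * h ^ (i : ℕ)) * t ^ (i : ℕ)) ^ 2 := by
  rw [← intervalIntegral.smul_integral_comp_mul_left (fun x => (S.eval x) ^ 2) h, smul_eq_mul]
  congr 1
  apply intervalIntegral.integral_congr
  intro t _
  simp only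
  congr 1
  rw [Polynomial.eval_eq_sum_range' (Nat.lt_succ_of_le hS), ← Fin.sum_univ_eq_sum_range]
  exact Finset.sum_congr rfl fun i _ => by rw [mul_pow]; ring

lemma keyD (R : Polynomial ℝ) (j : ℕ) :
    ((Polynomial.derivative^[j] R).eval 0) = (j.factorial : ℝ) * R.coeff j := by
  rw [← Polynomial.coeff_zero_eq_eval_zero, Polynomial.coeff_iterate_derivative]
  simp [Nat.descFactorial_self, nsmul_eq_mul]

/-- 1D CutFEM stability estimate: the `L²` norm of a continuous piecewise polynomial
on `(0,h)` is controlled by its `L²` norm on `(-h,0)` plus the scaled derivative jumps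
at the interface `0`. -/
theorem ghost_penalty_L2_control (p : ℕ) :
    ∃ C : ℝ, 0 < C ∧ ∀ h : ℝ, 0 < h → ∀ P Q : Polynomial ℝ,
      P.natDegree ≤ p → Q.natDegree ≤ p → P.eval 0 = Q.eval 0 →
      (∫ x in (0:ℝ)..h, (Q.eval x) ^ 2) ≤
        C * ((∫ x in (-h)..(0:ℝ), (P.eval x) ^ 2) +
          ∑ j ∈ Finset.Icc 1 p,
            h ^ (2 * j + 1) *
              ((Polynomial.derivative^[j] Q).eval 0 -
                (Polynomial.derivative^[j] P).eval 0) ^ 2) := by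
  obtain ⟨c, hc, hkey⟩ := keyA (p+1) p.succ_pos
  refine ⟨2 * (p+1) * (c+1), by positivity, ?_⟩
  intro h hh P Q hP hQ h0
  set n : ℕ := p + 1 with hn
  set R : Polynomial ℝ := Q - P with hRdef
  have hRdeg : R.natDegree ≤ p := le_trans (Polynomial.natDegree_sub_le _ _) (max_le hQ hP)
  have hR0 : R.coeff 0 = 0 := by
    rw [Polynomial.coeff_zero_eq_eval_zero, hRdef, Polynomial.eval_sub, h0, sub_self]
  set b : Fin n → ℝ := fun i => P.coeff i * h ^ (i : ℕ) with hb
  set b' : Fin n → ℝ := fun i => R.coeff i * h ^ (i : ℕ) with hb'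
  -- integral identities
  have hIP0h : (∫ x in (0:ℝ)..h, (P.eval x) ^ 2)
      = h * ∫ t in (0:ℝ)..1, (∑ i, b i * t ^ (i : ℕ)) ^ 2 := by
    have := keyC p hP h 0 1
    simpa using this
  have hIPm : (∫ x in (-h)..(0:ℝ), (P.eval x) ^ 2)
      = h * ∫ t in (-1:ℝ)..0, (∑ i, b i * t ^ (i : ℕ)) ^ 2 := by
    have := keyC p hP h (-1) 0
    simpa using this
  have hIR0h : (∫ x in (0:ℝ)..h, (R.eval x) ^ 2)
      = h * ∫ t in (0:ℝ)..1, (∑ i, b' i * t ^ (i : ℕ)) ^ 2 := by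
    have := keyC p hRdeg h 0 1
    simpa using this
  -- split Q
  have hsplit : (∫ x in (0:ℝ)..h, (Q.eval x) ^ 2)
      ≤ 2 * (∫ x in (0:ℝ)..h, (P.eval x) ^ 2) + 2 * (∫ x in (0:ℝ)..h, (R.eval x) ^ 2) := by
    have hpt : ∀ x ∈ Set.Icc (0:ℝ) h,
        (Q.eval x) ^ 2 ≤ 2 * (P.eval x) ^ 2 + 2 * (R.eval x) ^ 2 := by
      intro x _
      have hQx : Q.eval x = P.eval x + R.eval x := by rw [hRdef]; ring_nf; simp
      rw [hQx]
      nlinarith [sq_nonneg (P.eval x - R.eval x)]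
    calc (∫ x in (0:ℝ)..h, (Q.eval x) ^ 2)
        ≤ ∫ x in (0:ℝ)..h, (2 * (P.eval x) ^ 2 + 2 * (R.eval x) ^ 2) := by
          apply intervalIntegral.integral_mono_on hh.le
            (Continuous.intervalIntegrable (by fun_prop) _ _)
            (Continuous.intervalIntegrable (by fun_prop) _ _) hpt
      _ = 2 * (∫ x in (0:ℝ)..h, (P.eval x) ^ 2) + 2 * (∫ x in (0:ℝ)..h, (R.eval x) ^ 2) := by
          rw [intervalIntegral.integral_add
            ((Continuous.intervalIntegrable (by fun_prop) _ _))
            ((Continuous.intervalIntegrable (by fun_prop) _ _)),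
            intervalIntegral.integral_const_mul, intervalIntegral.integral_const_mul]
  -- bound for P part
  have hPbound : (∫ x in (0:ℝ)..h, (P.eval x) ^ 2)
      ≤ (n : ℝ) * c * (∫ x in (-h)..(0:ℝ), (P.eval x) ^ 2) := by
    rw [hIP0h, hIPm]
    calc h * ∫ t in (0:ℝ)..1, (∑ i, b i * t ^ (i : ℕ)) ^ 2
        ≤ h * ((n : ℝ) * ∑ i, (b i) ^ 2) := by
          apply mul_le_mul_of_nonneg_left (keyB n b) hh.le
      _ ≤ h * ((n : ℝ) * (c * ∫ t in (-1:ℝ)..0, (∑ i, b i * t ^ (i : ℕ)) ^ 2)) := by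
          apply mul_le_mul_of_nonneg_left _ hh.le
          apply mul_le_mul_of_nonneg_left (hkey b) (Nat.cast_nonneg _)
      _ = (n : ℝ) * c * (h * ∫ t in (-1:ℝ)..0, (∑ i, b i * t ^ (i : ℕ)) ^ 2) := by ring
  -- bound for R part
  have hjump : ∀ j : ℕ,
      (R.coeff j) ^ 2 ≤ ((Polynomial.derivative^[j] Q).eval 0
        - (Polynomial.derivative^[j] P).eval 0) ^ 2 := by
    intro j
    have hsub : (Polynomial.derivative^[j] Q).eval 0 - (Polynomial.derivative^[j] P).eval 0
        = (Polynomial.derivative^[j] R).eval 0 := by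
      rw [hRdef, Polynomial.iterate_derivative_sub, Polynomial.eval_sub]
    rw [hsub, keyD]
    have hfac : (1:ℝ) ≤ (j.factorial : ℝ) := by exact_mod_cast j.factorial_pos
    have h2 : (1:ℝ) ≤ ((j.factorial : ℝ)) ^ 2 := one_le_pow₀ hfac
    nlinarith [sq_nonneg (R.coeff j), h2]
  have hRbound : (∫ x in (0:ℝ)..h, (R.eval x) ^ 2)
      ≤ (n : ℝ) * ∑ j ∈ Finset.Icc 1 p, h ^ (2*j+1) *
          ((Polynomial.derivative^[j] Q).eval 0 - (Polynomial.derivative^[j] P).eval 0) ^ 2 := by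
    rw [hIR0h]
    calc h * ∫ t in (0:ℝ)..1, (∑ i, b' i * t ^ (i : ℕ)) ^ 2
        ≤ h * ((n : ℝ) * ∑ i, (b' i) ^ 2) := by
          apply mul_le_mul_of_nonneg_left (keyB n b') hh.le
      _ = (n : ℝ) * (h * ∑ i, (b' i) ^ 2) := by ring
      _ = (n : ℝ) * ∑ i : Fin n, h * (b' i) ^ 2 := by rw [Finset.mul_sum]
      _ = (n : ℝ) * ∑ i ∈ Finset.range n, h ^ (2*i+1) * (R.coeff i) ^ 2 := by
          congr 1
          rw [← Fin.sum_univ_eq_sum_range (fun i => h ^ (2*i+1) * (R.coeff i) ^ 2) n]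
          refine Finset.sum_congr rfl fun i _ => ?_
          simp only [hb']
          rw [mul_pow, ← pow_mul]
          ring
      _ = (n : ℝ) * ∑ j ∈ Finset.Icc 1 p, h ^ (2*j+1) * (R.coeff j) ^ 2 := by
          congr 1
          have hset : Finset.range n = insert 0 (Finset.Icc 1 p) := by
            ext x
            simp only [Finset.mem_range, Finset.mem_insert, Finset.mem_Icc, hn]
            omega
          rw [hset, Finset.sum_insert (by simp)]
          rw [hR0]
          simp
      _ ≤ (n : ℝ) * ∑ j ∈ Finset.Icc 1 p, h ^ (2*j+1) *
          ((Polynomial.derivative^[j] Q).eval 0 - (Polynomial.derivative^[j] P).eval 0) ^ 2 := by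
          apply mul_le_mul_of_nonneg_left _ (Nat.cast_nonneg _)
          apply Finset.sum_le_sum
          intro j _
          exact mul_le_mul_of_nonneg_left (hjump j) (by positivity)
  -- combine
  have hInonneg : 0 ≤ ∫ x in (-h)..(0:ℝ), (P.eval x) ^ 2 :=
    intervalIntegral.integral_nonneg (by linarith) (fun x _ => sq_nonneg _)
  have hSnonneg : 0 ≤ ∑ j ∈ Finset.Icc 1 p, h ^ (2*j+1) *
      ((Polynomial.derivative^[j] Q).eval 0 - (Polynomial.derivative^[j] P).eval 0) ^ 2 := by
    apply Finset.sum_nonneg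
    intro j _
    positivity
  have hcast : ((n : ℝ)) = (p : ℝ) + 1 := by simp [hn]
  set I := ∫ x in (-h)..(0:ℝ), (P.eval x) ^ 2
  set Sj := ∑ j ∈ Finset.Icc 1 p, h ^ (2*j+1) *
      ((Polynomial.derivative^[j] Q).eval 0 - (Polynomial.derivative^[j] P).eval 0) ^ 2
  calc (∫ x in (0:ℝ)..h, (Q.eval x) ^ 2)
      ≤ 2 * (∫ x in (0:ℝ)..h, (P.eval x) ^ 2) + 2 * (∫ x in (0:ℝ)..h, (R.eval x) ^ 2) := hsplit
    _ ≤ 2 * ((n : ℝ) * c * I) + 2 * ((n : ℝ) * Sj) := by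
        gcongr
    _ ≤ 2 * (p+1) * (c+1) * (I + Sj) := by
        rw [hcast]
        nlinarith [mul_nonneg hInonneg (by positivity : (0:ℝ) ≤ 2*((p:ℝ)+1)),
          mul_nonneg (mul_nonneg hSnonneg hc.le) (by positivity : (0:ℝ) ≤ 2*((p:ℝ)+1))]
end
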